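/- Let A be an associative algebra, D : A → A a derivation, and X ∈ A such that [X, D(X)] = C where C commutes with X. Then for every natural number n, D(X^n) = n·D(X)·X^(n-1) + (n(n−1)/2)·C·X^(n−2). -/

import Mathlib

/-!
Write `X^(m+3) = X * X^(m+2)` and push `X` through the Leibniz expansion of `D (X^(m+2))`:
each time `X` passes `D X` it leaves behind `[X, D X] = C`, which commutes with `X`. This adds
`m + 2` new copies of `C * X^(m+1)`, so the coefficient of `C` grows as `(m+2).choose 2`.
-/

lemma map_one_eq_zero_of_leibniz {A : Type*} [NonAssocRing A] {D : A → A}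
    (hleib : ∀ x y : A, D (x * y) = D x * y + x * D y) : D 1 = 0 := by
  have h := hleib 1 1
  simp only [one_mul, mul_one] at h
  exact left_eq_add.mp h

section LeibnizPow

variable {A : Type*} [Ring A] {D : A → A}
  (hleib : ∀ x y : A, D (x * y) = D x * y + x * D y)
  {X C : A} (hC : X * D X - D X * X = C) (hXC : C * X = X * C)

include hleib hC hXC

lemma map_pow_add_two_of_leibniz (m : ℕ) :
    D (X ^ (m + 2)) = (m + 2) • (D X * X ^ (m + 1)) + (m + 2).choose 2 • (C * X ^ m) := by
  have hcomm : X * D X = D X * X + C := by rw [← hC]; abel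
  induction m with
  | zero =>
    rw [sq, hleib, hcomm]
    simp only [Nat.choose_self, zero_add, pow_one, pow_zero, mul_one, one_smul, two_smul]
    abel
  | succ m ih =>
    have hDX : X * (D X * X ^ (m + 1)) = D X * X ^ (m + 2) + C * X ^ (m + 1) := by
      rw [← mul_assoc, hcomm, add_mul, mul_assoc, ← pow_succ']
    have hCX : X * (C * X ^ m) = C * X ^ (m + 1) := by
      rw [← mul_assoc, ← hXC, mul_assoc, ← pow_succ']
    have hchoose : (m + 3).choose 2 = (m + 2) + (m + 2).choose 2 := by
      rw [Nat.choose_succ_succ', Nat.choose_one_right]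
    rw [pow_succ', hleib, ih, mul_add, mul_smul_comm, mul_smul_comm, hDX, hCX, hchoose]
    module

end LeibnizPow

theorem derivation_pow_right_general (A : Type*) [Ring A] (D : A → A)
    (hleib : ∀ x y : A, D (x * y) = D x * y + x * D y)
    (X C : A) (hC : X * D X - D X * X = C) (hXC : C * X = X * C) (n : ℕ) :
    D (X ^ n) = n • (D X * X ^ (n - 1)) + (n * (n - 1) / 2) • (C * X ^ (n - 2)) := by
  match n with
  | 0 => simpa using map_one_eq_zero_of_leibniz hleib
  | 1 => simp
  | m + 2 =>
    rw [map_pow_add_two_of_leibniz hleib hC hXC m, ← Nat.choose_two_right]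
    simp

/-- If `D` is a derivation of an associative algebra `A` and
`[X, D X] = C` with `C` commuting with `X`, then
`D (X^n) = n • D X * X^(n-1) + (n(n-1)/2) • C * X^(n-2)`. -/
theorem derivation_pow_right (A : Type*) [Ring A] (D : A → A)
    (hadd : ∀ x y : A, D (x + y) = D x + D y)
    (hleib : ∀ x y : A, D (x * y) = D x * y + x * D y)
    (X C : A) (hC : X * D X - D X * X = C) (hXC : C * X = X * C) (n : ℕ) :
    D (X ^ n) = n • (D X * X ^ (n - 1)) + (n * (n - 1) / 2) • (C * X ^ (n - 2)) :=
  derivation_pow_right_general A D hleib X C hC hXC n
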